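/- Let n ≥ 4 be an integer, let s ∈ ℂ* be such that q = s² satisfies q^n = 1 and q ≠ 1, and let χ₀ ∈ ℂ*. Let V be a complex vector space, let w_1, …, w_{n−2} ∈ V be nonzero vectors, and let T_1, …, T_{n−2} be linear endomorphisms of V such that for all 1 ≤ j, k ≤ n−2: T_j(w_j) = χ₀·w_j; T_j(w_k) = χ₀·(−q·w_k − s·w_j) whenever |j − k| = 1; and T_j(w_k) = −χ₀·q·w_k whenever |j − k| > 1. Then the vectors w_1, …, w_{n−2} are linearly independent. -/

import Mathlib

/-!
Write `T_j w_k = -χ₀ q w_k + χ₀ M_{jk} w_j` with `M` tridiagonal (`1 + q` on the diagonal, `-s`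
beside it). Applying `T_j` to a relation `∑ g_k w_k = 0` leaves `(M g)_j w_j = 0`, so `M g = 0`.
Padding `g` with zeros at both ends turns `M g = 0` into the recurrence
`s c_{i+2} = (1 + q) c_{i+1} - s c_i`, whose solution with `c_0 = 0` is
`s^i c_i = s c_1 (1 + q + ⋯ + q^{i-1})`. The boundary condition `c_{n-1} = 0` forces `c_1 = 0`,
since `1 + q + ⋯ + q^{n-2} = (q^{n-1} - 1)/(q - 1) ≠ 0` when `q^n = 1 ≠ q`.
-/

open Finset Matrix

theorem linearIndependent_of_apply_eq_smul_add_smul {ι K V : Type*} [Fintype ι] [Field K]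
    [AddCommGroup V] [Module K V] {w : ι → V} (hw : ∀ j, w j ≠ 0) (T : ι → V →ₗ[K] V) (a : K)
    (M : Matrix ι ι K) (hT : ∀ j k, T j (w k) = a • w k + M j k • w j)
    (hM : ∀ g, M *ᵥ g = 0 → g = 0) : LinearIndependent K w := by
  rw [Fintype.linearIndependent_iff]
  intro g hg
  refine congrFun (hM g (funext fun j => ?_))
  have hTg : T j (∑ k, g k • w k) = a • ∑ k, g k • w k + (M *ᵥ g) j • w j := by
    simp only [map_sum, map_smul, hT, smul_add, sum_add_distrib, smul_sum, mulVec, dotProduct,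
      sum_smul, smul_smul, mul_comm]
  rw [hg, map_zero, smul_zero, zero_add, eq_comm, smul_eq_zero] at hTg
  exact hTg.resolve_right (hw j)

theorem pow_mul_eq_geom_sum_of_recurrence {R : Type*} [CommRing R] {s : R} {c : ℕ → R} {N : ℕ}
    (h0 : c 0 = 0) (hrec : ∀ i, i + 2 ≤ N → s * c (i + 2) = (1 + s ^ 2) * c (i + 1) - s * c i) :
    ∀ i ≤ N, s ^ i * c i = s * c 1 * ∑ k ∈ range i, (s ^ 2) ^ k := by
  suffices h : ∀ i, i + 1 ≤ N → s ^ i * c i = s * c 1 * ∑ k ∈ range i, (s ^ 2) ^ k ∧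
      s ^ (i + 1) * c (i + 1) = s * c 1 * ∑ k ∈ range (i + 1), (s ^ 2) ^ k by
    intro i hi
    rcases i with _ | i
    · simp [h0]
    · exact (h i hi).2
  intro i
  induction i with
  | zero => intro; simp [h0]
  | succ i ih =>
    intro hi
    obtain ⟨hi0, hi1⟩ := ih (by omega)
    refine ⟨hi1, ?_⟩
    simp only [sum_range_succ] at hi1 ⊢
    linear_combination s ^ (i + 1) * hrec i (by omega) + (1 + s ^ 2) * hi1 - s ^ 2 * hi0

section Tridiagonal

variable {K : Type*} [Field K] {m : ℕ}

def tridiag (m : ℕ) (a b : K) : Matrix (Fin m) (Fin m) K :=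
  Matrix.of fun j k => if j = k then a else if ((j : ℤ) - k).natAbs = 1 then b else 0

def shiftExtend (g : Fin m → K) : ℕ → K
  | 0 => 0
  | i + 1 => if h : i < m then g ⟨i, h⟩ else 0

theorem shiftExtend_val_add_one (g : Fin m → K) (j : Fin m) :
    shiftExtend g (j + 1) = g j := by
  simp [shiftExtend]

theorem sum_ite_val_add_one_eq (g : Fin m → K) (i : ℕ) :
    ∑ k : Fin m, (if (k : ℕ) + 1 = i then g k else 0) = shiftExtend g i := by
  cases i with
  | zero => simp [shiftExtend]
  | succ i =>
    simp only [Nat.add_right_cancel_iff, shiftExtend]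
    split_ifs with h
    · rw [sum_eq_single_of_mem ⟨i, h⟩ (mem_univ _) fun k _ hk => if_neg (hk <| Fin.ext ·)]
      exact if_pos rfl
    · exact sum_eq_zero fun k _ => if_neg (by omega)

theorem tridiag_mulVec_apply (a b : K) (g : Fin m → K) (j : Fin m) :
    (tridiag m a b *ᵥ g) j =
      a * shiftExtend g (j + 1) + b * shiftExtend g j + b * shiftExtend g (j + 2) := by
  have hsplit : ∀ k : Fin m, tridiag m a b j k * g k =
      a * (if (k : ℕ) + 1 = j + 1 then g k else 0) + b * (if (k : ℕ) + 1 = j then g k else 0)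
        + b * (if (k : ℕ) + 1 = j + 2 then g k else 0) := by
    intro k
    simp only [tridiag, of_apply, Fin.ext_iff]
    split_ifs <;> first | ring1 | (exfalso; omega)
  simp only [mulVec, dotProduct, hsplit, sum_add_distrib, ← mul_sum, sum_ite_val_add_one_eq]

theorem tridiag_mulVec_eq_zero {s : K} (hs : s ≠ 0)
    (hgeom : ∑ k ∈ range (m + 1), (s ^ 2) ^ k ≠ 0) {g : Fin m → K}
    (hg : tridiag m (1 + s ^ 2) (-s) *ᵥ g = 0) : g = 0 := by
  set c := shiftExtend g
  have hrec : ∀ i, i + 2 ≤ m + 1 → s * c (i + 2) = (1 + s ^ 2) * c (i + 1) - s * c i := by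
    intro i hi
    have := congrFun hg ⟨i, by omega⟩
    rw [tridiag_mulVec_apply, Pi.zero_apply] at this
    linear_combination -this
  have hsol := pow_mul_eq_geom_sum_of_recurrence (N := m + 1) rfl hrec
  have hc1 : c 1 = 0 := by
    have hend := hsol (m + 1) le_rfl
    rw [show c (m + 1) = 0 by simp [c, shiftExtend], mul_zero, eq_comm] at hend
    simpa [hs, hgeom] using hend
  funext j
  have := hsol (j + 1) (by omega)
  simpa [hc1, hs, c, shiftExtend_val_add_one] using this

end Tridiagonal

theorem geom_sum_pred_ne_zero {K : Type*} [Field K] {q : K} {n : ℕ} (hn : n ≠ 0) (hq : q ^ n = 1)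
    (hq1 : q ≠ 1) : ∑ k ∈ range (n - 1), q ^ k ≠ 0 := by
  intro h
  have := geom_sum_mul q (n - 1)
  rw [h, zero_mul, eq_comm, sub_eq_zero] at this
  apply hq1
  rw [← hq, ← Nat.sub_add_cancel (Nat.one_le_iff_ne_zero.mpr hn), pow_succ, this, one_mul]

theorem kernel_vectors_linearIndependent (n : ℕ) (hn : 4 ≤ n)
    (s q χ₀ : ℂ) (hs : s ^ 2 = q) (hq : q ^ n = 1) (hq1 : q ≠ 1)
    (hχ : χ₀ ≠ 0)
    {V : Type*} [AddCommGroup V] [Module ℂ V]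
    (w : Fin (n - 2) → V) (hw : ∀ j, w j ≠ 0)
    (T : Fin (n - 2) → (V →ₗ[ℂ] V))
    (hTdiag : ∀ j, T j (w j) = χ₀ • w j)
    (hTadj : ∀ j k : Fin (n - 2), ((j : ℤ) - (k : ℤ)).natAbs = 1 →
      T j (w k) = χ₀ • ((-q) • w k - s • w j))
    (hTfar : ∀ j k : Fin (n - 2), 1 < ((j : ℤ) - (k : ℤ)).natAbs →
      T j (w k) = (-(χ₀ * q)) • w k) :
    LinearIndependent ℂ w := by
  subst hs
  have hs0 : s ≠ 0 := by
    rintro rfl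
    simp [zero_pow (by omega : n ≠ 0)] at hq
  have hT : ∀ j k, T j (w k) = (-(χ₀ * s ^ 2)) • w k +
      (χ₀ • tridiag (n - 2) (1 + s ^ 2) (-s)) j k • w j := by
    intro j k
    simp only [tridiag, Matrix.smul_apply, of_apply, smul_eq_mul, mul_ite, mul_zero]
    split_ifs with hjk hadj
    · subst hjk; rw [hTdiag]; module
    · rw [hTadj j k hadj]; module
    · rw [hTfar j k (by omega)]; module
  refine linearIndependent_of_apply_eq_smul_add_smul hw T _ _ hT fun g hg => ?_
  rw [smul_mulVec, smul_eq_zero] at hg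
  refine tridiag_mulVec_eq_zero hs0 ?_ (hg.resolve_left hχ)
  rw [show n - 2 + 1 = n - 1 by omega]
  exact geom_sum_pred_ne_zero (by omega) hq hq1
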